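/- arXiv:1611.09079 — 7 statements merged into one kernel-verified Lean document; each statement's English description precedes it below -/
import Mathlib

section
/- Let φ ∈ 𝒫. Then φ extends uniquely to a continuous function φ̄ on ℝ₊², given by φ̄(s,0) = s·lim_{t→0⁺} φ(1,t), φ̄(0,t) = t·lim_{s→0⁺} φ(s,1), and φ̄(0,0) = 0, and this extension is continuous on ℝ₊² (the limits exist since φ₀ and φ₁ are non-decreasing and bounded near 0). -/
/-!
The function `f = φ 1` is monotone on `(0, ∞)` and satisfies `f (c * u) ≤ c * f u` for
`c ≥ 1` (since `φ 1 (c u) ≤ φ c (c u) = c φ 1 u`), which squeezes `f v` between `f u` and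
`(v / u) f u` and so makes it continuous on `(0, ∞)`; monotonicity and nonnegativity give its
limit at `0⁺`. Writing `φ s t = s φ(1, t/s)` near points with `s > 0`, and symmetrically near
points with `t > 0`, transfers this to the closed quadrant off the origin, while at the origin
`0 ≤ φ s t ≤ (s + t) φ(1, 1)`. Uniqueness holds because the open quadrant is dense.
-/

open Set Filter Topology Function

lemma nonneg_of_monotoneOn_of_le_mul {f : ℝ → ℝ} (hf : MonotoneOn f (Ioi 0))
    (hsub : ∀ c u : ℝ, 1 ≤ c → 0 < u → f (c * u) ≤ c * f u) {u : ℝ} (hu : 0 < u) :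
    0 ≤ f u := by
  have hmono : f u ≤ f (2 * u) := hf hu (mem_Ioi.2 (by positivity)) (by linarith)
  linarith [hsub 2 u one_le_two hu]

lemma abs_sub_le_of_monotoneOn_of_le_mul {f : ℝ → ℝ} (hf : MonotoneOn f (Ioi 0))
    (hsub : ∀ c u : ℝ, 1 ≤ c → 0 < u → f (c * u) ≤ c * f u) {u v : ℝ} (hu : 0 < u)
    (hv : 0 < v) : |f v - f u| ≤ |v - u| / u * f u := by
  rcases le_total u v with huv | hvu
  · have hup : f v ≤ v / u * f u := by
      simpa [div_mul_cancel₀ v hu.ne'] using hsub (v / u) u ((one_le_div hu).2 huv) hu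
    rw [abs_of_nonneg (sub_nonneg.2 (hf hu hv huv)), abs_of_nonneg (sub_nonneg.2 huv)]
    calc f v - f u ≤ v / u * f u - f u := by linarith
      _ = (v - u) / u * f u := by field_simp
  · have hup : f u ≤ u / v * f v := by
      simpa [div_mul_cancel₀ u hv.ne'] using hsub (u / v) v ((one_le_div hv).2 hvu) hv
    have hlow : v / u * f u ≤ f v :=
      calc v / u * f u ≤ v / u * (u / v * f v) := by gcongr
        _ = f v := by field_simp
    rw [abs_of_nonpos (sub_nonpos.2 (hf hv hu hvu)), abs_of_nonpos (sub_nonpos.2 hvu)]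
    calc -(f v - f u) ≤ f u - v / u * f u := by linarith
      _ = -(v - u) / u * f u := by field_simp; ring

lemma continuousOn_of_monotoneOn_of_le_mul {f : ℝ → ℝ} (hf : MonotoneOn f (Ioi 0))
    (hsub : ∀ c u : ℝ, 1 ≤ c → 0 < u → f (c * u) ≤ c * f u) :
    ContinuousOn f (Ioi 0) := by
  intro u hu
  refine ContinuousAt.continuousWithinAt ?_
  rw [ContinuousAt, tendsto_iff_dist_tendsto_zero]
  have hbound : ∀ᶠ v in 𝓝 u, dist (f v) (f u) ≤ |v - u| / u * f u := by
    filter_upwards [Ioi_mem_nhds hu] with v hv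
    exact abs_sub_le_of_monotoneOn_of_le_mul hf hsub hu hv
  refine squeeze_zero' (Eventually.of_forall fun _ => dist_nonneg) hbound ?_
  have hcont : Continuous fun v => |v - u| / u * f u := by fun_prop
  simpa using hcont.tendsto u

lemma exists_tendsto_nhdsGT_zero_of_monotoneOn {f : ℝ → ℝ} (hf : MonotoneOn f (Ioi 0))
    (hnonneg : ∀ u, 0 < u → 0 ≤ f u) :
    ∃ a, 0 ≤ a ∧ (∀ u, 0 < u → a ≤ f u) ∧ Tendsto f (𝓝[>] 0) (𝓝 a) := by
  have hbdd : BddBelow (f '' Ioi 0) := ⟨0, by rintro _ ⟨u, hu, rfl⟩; exact hnonneg u hu⟩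
  refine ⟨sInf (f '' Ioi 0), ?_, fun u hu => csInf_le hbdd ⟨u, hu, rfl⟩,
    hf.tendsto_nhdsGT hbdd⟩
  exact le_csInf (nonempty_Ioi.image f) (by rintro _ ⟨u, hu, rfl⟩; exact hnonneg u hu)

lemma continuousOn_Ici_ite_of_tendsto {f : ℝ → ℝ} {a : ℝ} (hf : ContinuousOn f (Ioi 0))
    (ha : Tendsto f (𝓝[>] 0) (𝓝 a)) :
    ContinuousOn (fun u => if 0 < u then f u else a) (Ici 0) := by
  intro u hu
  rcases (mem_Ici.1 hu).eq_or_lt with rfl | hu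
  · rw [← continuousWithinAt_Ioi_iff_Ici, ContinuousWithinAt, if_neg (lt_irrefl 0)]
    exact ha.congr' (eventually_nhdsWithin_of_forall fun v hv => (if_pos hv).symm)
  · refine ((hf.continuousAt (Ioi_mem_nhds hu)).congr ?_).continuousWithinAt
    filter_upwards [Ioi_mem_nhds hu] with v hv
    exact (if_pos hv).symm

structure IsHomogeneousMonotone (φ : ℝ → ℝ → ℝ) : Prop where
  homogeneous : ∀ l s t : ℝ, 0 < l → 0 < s → 0 < t → φ (l * s) (l * t) = l * φ s t
  mono_left : ∀ t s s' : ℝ, 0 < t → 0 < s → s ≤ s' → φ s t ≤ φ s' t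
  mono_right : ∀ s t t' : ℝ, 0 < s → 0 < t → t ≤ t' → φ s t ≤ φ s t'

namespace IsHomogeneousMonotone

variable {φ : ℝ → ℝ → ℝ}

lemma swap (hφ : IsHomogeneousMonotone φ) : IsHomogeneousMonotone (swap φ) where
  homogeneous l s t hl hs ht := hφ.homogeneous l t s hl ht hs
  mono_left t s s' ht hs h := hφ.mono_right t s s' ht hs h
  mono_right s t t' hs ht h := hφ.mono_left s t t' hs ht h

lemma eq_mul_apply_one_div (hφ : IsHomogeneousMonotone φ) {s t : ℝ} (hs : 0 < s)
    (ht : 0 < t) : φ s t = s * φ 1 (t / s) := by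
  have := hφ.homogeneous s 1 (t / s) hs one_pos (div_pos ht hs)
  rwa [mul_one, mul_div_cancel₀ t hs.ne'] at this

lemma monotoneOn_one (hφ : IsHomogeneousMonotone φ) : MonotoneOn (φ 1) (Ioi 0) :=
  fun u hu v _ huv => hφ.mono_right 1 u v one_pos hu huv

lemma apply_one_mul_le (hφ : IsHomogeneousMonotone φ) {c u : ℝ} (hc : 1 ≤ c) (hu : 0 < u) :
    φ 1 (c * u) ≤ c * φ 1 u := by
  have hc0 : 0 < c := one_pos.trans_le hc
  calc φ 1 (c * u) ≤ φ c (c * u) := hφ.mono_left _ 1 c (by positivity) one_pos hc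
    _ = c * φ 1 u := by simpa using hφ.homogeneous c 1 u hc0 one_pos hu

lemma nonneg (hφ : IsHomogeneousMonotone φ) {s t : ℝ} (hs : 0 < s) (ht : 0 < t) :
    0 ≤ φ s t := by
  rw [hφ.eq_mul_apply_one_div hs ht]
  exact mul_nonneg hs.le (nonneg_of_monotoneOn_of_le_mul hφ.monotoneOn_one
    (fun _ _ => hφ.apply_one_mul_le) (div_pos ht hs))

lemma continuousOn_one (hφ : IsHomogeneousMonotone φ) : ContinuousOn (φ 1) (Ioi 0) :=
  continuousOn_of_monotoneOn_of_le_mul hφ.monotoneOn_one fun _ _ => hφ.apply_one_mul_le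

lemma exists_tendsto_one (hφ : IsHomogeneousMonotone φ) :
    ∃ a, 0 ≤ a ∧ a ≤ φ 1 1 ∧ Tendsto (φ 1) (𝓝[>] 0) (𝓝 a) := by
  obtain ⟨a, ha0, hle, ha⟩ := exists_tendsto_nhdsGT_zero_of_monotoneOn hφ.monotoneOn_one
    fun _ hu => hφ.nonneg one_pos hu
  exact ⟨a, ha0, hle 1 one_pos, ha⟩

lemma le_add_mul (hφ : IsHomogeneousMonotone φ) {s t : ℝ} (hs : 0 < s) (ht : 0 < t) :
    φ s t ≤ (s + t) * φ 1 1 := by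
  have hst : 0 < s + t := by positivity
  calc φ s t ≤ φ (s + t) t := hφ.mono_left t s _ ht hs (by linarith)
    _ ≤ φ (s + t) (s + t) := hφ.mono_right _ t _ hst ht (by linarith)
    _ = (s + t) * φ 1 1 := by simpa using hφ.homogeneous (s + t) 1 1 hst one_pos one_pos

end IsHomogeneousMonotone

/-- `a` and `b` stand for the limits of `φ 1 t` and `φ s 1` at `0⁺`. -/
noncomputable def boundaryExtension (φ : ℝ → ℝ → ℝ) (a b : ℝ) (p : ℝ × ℝ) : ℝ :=
  if 0 < p.1 ∧ 0 < p.2 then φ p.1 p.2 else p.1 * a + p.2 * b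

section BoundaryExtension

variable {φ : ℝ → ℝ → ℝ} {a b : ℝ}

lemma boundaryExtension_swap (p : ℝ × ℝ) :
    boundaryExtension (swap φ) b a p.swap = boundaryExtension φ a b p := by
  simp only [boundaryExtension, Prod.fst_swap, Prod.snd_swap, Function.swap, and_comm, add_comm]

lemma boundaryExtension_of_pos {s t : ℝ} (hs : 0 < s) (ht : 0 < t) :
    boundaryExtension φ a b (s, t) = φ s t :=
  if_pos ⟨hs, ht⟩

lemma boundaryExtension_eq_mul_ite (hφ : IsHomogeneousMonotone φ) {q : ℝ × ℝ} (hq1 : 0 < q.1)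
    (hq2 : 0 ≤ q.2) :
    boundaryExtension φ a b q = q.1 * if 0 < q.2 / q.1 then φ 1 (q.2 / q.1) else a := by
  rcases hq2.eq_or_lt with h | h
  · simp [boundaryExtension, ← h]
  · rw [boundaryExtension, if_pos ⟨hq1, h⟩, if_pos (div_pos h hq1),
      hφ.eq_mul_apply_one_div hq1 h]

lemma boundaryExtension_nonneg_and_le (hφ : IsHomogeneousMonotone φ) (ha : 0 ≤ a)
    (ha' : a ≤ φ 1 1) (hb : 0 ≤ b) (hb' : b ≤ φ 1 1) {q : ℝ × ℝ}
    (hq : q ∈ Ici 0 ×ˢ Ici 0) :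
    0 ≤ boundaryExtension φ a b q ∧ boundaryExtension φ a b q ≤ (q.1 + q.2) * φ 1 1 := by
  obtain ⟨hq1, hq2⟩ : 0 ≤ q.1 ∧ 0 ≤ q.2 := hq
  unfold boundaryExtension
  split_ifs with h
  · exact ⟨hφ.nonneg h.1 h.2, hφ.le_add_mul h.1 h.2⟩
  · constructor
    · positivity
    · nlinarith [mul_le_mul_of_nonneg_left ha' hq1, mul_le_mul_of_nonneg_left hb' hq2]

lemma continuousWithinAt_boundaryExtension_of_fst_pos (hφ : IsHomogeneousMonotone φ)
    (ha : Tendsto (φ 1) (𝓝[>] 0) (𝓝 a)) {p : ℝ × ℝ} (hp : p ∈ Ici 0 ×ˢ Ici 0)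
    (hp1 : 0 < p.1) :
    ContinuousWithinAt (boundaryExtension φ a b) (Ici 0 ×ˢ Ici 0) p := by
  have hF : ContinuousOn (fun u => if 0 < u then φ 1 u else a) (Ici 0) :=
    continuousOn_Ici_ite_of_tendsto hφ.continuousOn_one ha
  have hmaps : MapsTo (fun q : ℝ × ℝ => q.2 / q.1) (Ici 0 ×ˢ Ici 0) (Ici 0) :=
    fun q hq => mem_Ici.2 (div_nonneg hq.2 hq.1)
  have hdiv : ContinuousWithinAt (fun q : ℝ × ℝ => q.2 / q.1) (Ici 0 ×ˢ Ici 0) p :=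
    (continuousAt_snd.div continuousAt_fst hp1.ne').continuousWithinAt
  have hcomp : ContinuousWithinAt (fun q : ℝ × ℝ => q.1 *
      if 0 < q.2 / q.1 then φ 1 (q.2 / q.1) else a) (Ici 0 ×ˢ Ici 0) p :=
    continuousWithinAt_fst.mul
      ((hF _ (hmaps hp)).comp (f := fun q : ℝ × ℝ => q.2 / q.1) hdiv hmaps)
  refine hcomp.congr_of_eventuallyEq ?_ (boundaryExtension_eq_mul_ite hφ hp1 hp.2)
  filter_upwards [self_mem_nhdsWithin, mem_nhdsWithin_of_mem_nhds
    ((isOpen_lt continuous_const continuous_fst).mem_nhds hp1)] with q hq hq1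
  exact boundaryExtension_eq_mul_ite hφ hq1 hq.2

lemma continuousWithinAt_boundaryExtension_of_snd_pos (hφ : IsHomogeneousMonotone φ)
    (hb : Tendsto (fun s => φ s 1) (𝓝[>] 0) (𝓝 b)) {p : ℝ × ℝ}
    (hp : p ∈ Ici 0 ×ˢ Ici 0) (hp2 : 0 < p.2) :
    ContinuousWithinAt (boundaryExtension φ a b) (Ici 0 ×ˢ Ici 0) p := by
  have h := continuousWithinAt_boundaryExtension_of_fst_pos (b := a) hφ.swap hb (p := p.swap)
    ⟨hp.2, hp.1⟩ hp2
  simpa only [comp_def, boundaryExtension_swap] using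
    h.comp continuous_swap.continuousWithinAt fun q hq => ⟨hq.2, hq.1⟩

lemma continuousWithinAt_boundaryExtension_zero (hφ : IsHomogeneousMonotone φ) (ha : 0 ≤ a)
    (ha' : a ≤ φ 1 1) (hb : 0 ≤ b) (hb' : b ≤ φ 1 1) :
    ContinuousWithinAt (boundaryExtension φ a b) (Ici 0 ×ˢ Ici 0) 0 := by
  have hbound :
      Tendsto (fun q : ℝ × ℝ => (q.1 + q.2) * φ 1 1) (𝓝[Ici 0 ×ˢ Ici 0] 0) (𝓝 0) := by
    have hcont : Continuous fun q : ℝ × ℝ => (q.1 + q.2) * φ 1 1 := by fun_prop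
    simpa using (hcont.tendsto 0).mono_left nhdsWithin_le_nhds
  have hsq q (hq : q ∈ Ici 0 ×ˢ Ici 0) := boundaryExtension_nonneg_and_le hφ ha ha' hb hb' hq
  rw [ContinuousWithinAt, show boundaryExtension φ a b 0 = 0 by simp [boundaryExtension]]
  exact tendsto_of_tendsto_of_tendsto_of_le_of_le' tendsto_const_nhds hbound
    (eventually_nhdsWithin_of_forall fun q hq => (hsq q hq).1)
    (eventually_nhdsWithin_of_forall fun q hq => (hsq q hq).2)

lemma continuousOn_boundaryExtension (hφ : IsHomogeneousMonotone φ)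
    (ha : Tendsto (φ 1) (𝓝[>] 0) (𝓝 a)) (hb : Tendsto (fun s => φ s 1) (𝓝[>] 0) (𝓝 b))
    (ha0 : 0 ≤ a) (ha1 : a ≤ φ 1 1) (hb0 : 0 ≤ b) (hb1 : b ≤ φ 1 1) :
    ContinuousOn (boundaryExtension φ a b) (Ici 0 ×ˢ Ici 0) := by
  intro p hp
  rcases (mem_Ici.1 hp.1).eq_or_lt with h1 | h1
  · rcases (mem_Ici.1 hp.2).eq_or_lt with h2 | h2
    · obtain rfl : p = 0 := Prod.ext h1.symm h2.symm
      exact continuousWithinAt_boundaryExtension_zero hφ ha0 ha1 hb0 hb1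
    · exact continuousWithinAt_boundaryExtension_of_snd_pos hφ hb hp h2
  · exact continuousWithinAt_boundaryExtension_of_fst_pos hφ ha hp h1

end BoundaryExtension

theorem stmt4_general (φ : ℝ → ℝ → ℝ)
    (hhom : ∀ l s t : ℝ, 0 < l → 0 < s → 0 < t → φ (l * s) (l * t) = l * φ s t)
    (hmono0 : ∀ t s s' : ℝ, 0 < t → 0 < s → s ≤ s' → φ s t ≤ φ s' t)
    (hmono1 : ∀ s t t' : ℝ, 0 < s → 0 < t → t ≤ t' → φ s t ≤ φ s t') :
    ∃ a b : ℝ,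
      Filter.Tendsto (fun t => φ 1 t) (nhdsWithin 0 (Set.Ioi 0)) (nhds a) ∧
      Filter.Tendsto (fun s => φ s 1) (nhdsWithin 0 (Set.Ioi 0)) (nhds b) ∧
      ∃ ψ : ℝ × ℝ → ℝ,
        ContinuousOn ψ (Set.Ici 0 ×ˢ Set.Ici 0) ∧
        (∀ s t : ℝ, 0 < s → 0 < t → ψ (s, t) = φ s t) ∧
        (∀ s : ℝ, 0 ≤ s → ψ (s, 0) = s * a) ∧
        (∀ t : ℝ, 0 ≤ t → ψ (0, t) = t * b) ∧
        ψ (0, 0) = 0 ∧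
        ∀ ψ' : ℝ × ℝ → ℝ, ContinuousOn ψ' (Set.Ici 0 ×ˢ Set.Ici 0) →
          (∀ s t : ℝ, 0 < s → 0 < t → ψ' (s, t) = φ s t) →
          Set.EqOn ψ ψ' (Set.Ici 0 ×ˢ Set.Ici 0) := by
  have hφ : IsHomogeneousMonotone φ := ⟨hhom, hmono0, hmono1⟩
  obtain ⟨a, ha0, ha1, ha⟩ := hφ.exists_tendsto_one
  obtain ⟨b, hb0, hb1, hb⟩ := hφ.swap.exists_tendsto_one
  have hcont := continuousOn_boundaryExtension hφ ha hb ha0 ha1 hb0 hb1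
  refine ⟨a, b, ha, hb, boundaryExtension φ a b, hcont, fun s t hs ht =>
    boundaryExtension_of_pos hs ht, fun s _ => by simp [boundaryExtension],
    fun t _ => by simp [boundaryExtension], by simp [boundaryExtension],
    fun ψ' hψ' hψ'φ => ?_⟩
  have hdense : Ici (0 : ℝ) ×ˢ Ici (0 : ℝ) ⊆ closure (Ioi 0 ×ˢ Ioi 0) := by
    rw [closure_prod_eq, closure_Ioi]
  refine EqOn.of_subset_closure (fun q hq => ?_) hcont hψ'
    (prod_mono Ioi_subset_Ici_self Ioi_subset_Ici_self) hdense
  exact (boundaryExtension_of_pos hq.1 hq.2).trans (hψ'φ q.1 q.2 hq.1 hq.2).symm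

/-- `φ ∈ 𝒫` extends uniquely to a continuous function on `ℝ₊²` given by
`ψ(s,0) = s·lim_{t→0⁺} φ(1,t)`, `ψ(0,t) = t·lim_{s→0⁺} φ(s,1)`, `ψ(0,0) = 0`. -/
theorem stmt4 (φ : ℝ → ℝ → ℝ)
    (hnonneg : ∀ s t : ℝ, 0 < s → 0 < t → 0 ≤ φ s t)
    (hhom : ∀ l s t : ℝ, 0 < l → 0 < s → 0 < t → φ (l * s) (l * t) = l * φ s t)
    (hmono0 : ∀ t s s' : ℝ, 0 < t → 0 < s → s ≤ s' → φ s t ≤ φ s' t)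
    (hmono1 : ∀ s t t' : ℝ, 0 < s → 0 < t → t ≤ t' → φ s t ≤ φ s t') :
    ∃ a b : ℝ,
      Filter.Tendsto (fun t => φ 1 t) (nhdsWithin 0 (Set.Ioi 0)) (nhds a) ∧
      Filter.Tendsto (fun s => φ s 1) (nhdsWithin 0 (Set.Ioi 0)) (nhds b) ∧
      ∃ ψ : ℝ × ℝ → ℝ,
        ContinuousOn ψ (Set.Ici 0 ×ˢ Set.Ici 0) ∧
        (∀ s t : ℝ, 0 < s → 0 < t → ψ (s, t) = φ s t) ∧
        (∀ s : ℝ, 0 ≤ s → ψ (s, 0) = s * a) ∧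
        (∀ t : ℝ, 0 ≤ t → ψ (0, t) = t * b) ∧
        ψ (0, 0) = 0 ∧
        ∀ ψ' : ℝ × ℝ → ℝ, ContinuousOn ψ' (Set.Ici 0 ×ˢ Set.Ici 0) →
          (∀ s t : ℝ, 0 < s → 0 < t → ψ' (s, t) = φ s t) →
          Set.EqOn ψ ψ' (Set.Ici 0 ×ˢ Set.Ici 0) :=
  stmt4_general φ hhom hmono0 hmono1
end

section
/- Let φ ∈ 𝒫 and define φ₁(t) = φ(1,t), a = lim_{t→0⁺} φ₁(t), b = lim_{t→∞} φ₁(t)/t (both limits exist in ℝ₊), and ϕ₁(s) = max(a, b·s). If φ₁ is concave on (0,∞), then η₁ := φ₁ − ϕ₁ is non-negative, concave on (0,∞), and satisfies lim_{t→0⁺} η₁(t) = 0 and lim_{t→∞} η₁(t)/t = 0. -/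
open Filter

/-- For `φ ∈ 𝒫` with `φ₁ = φ(1,·)` concave, `a = lim_{t→0⁺} φ₁(t)`,
`b = lim_{t→∞} φ₁(t)/t`, `ϕ₁(s) = max(a, b·s)`, the function `η₁ = φ₁ − ϕ₁` is
non-negative, concave on `(0,∞)`, with `η₁(t) → 0` as `t → 0⁺` and `η₁(t)/t → 0` as
`t → ∞`. -/
theorem stmt7 (φ : ℝ → ℝ → ℝ)
    (hnonneg : ∀ s t : ℝ, 0 < s → 0 < t → 0 ≤ φ s t)
    (hhom : ∀ l s t : ℝ, 0 < l → 0 < s → 0 < t → φ (l * s) (l * t) = l * φ s t)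
    (hmono0 : ∀ t s s' : ℝ, 0 < t → 0 < s → s ≤ s' → φ s t ≤ φ s' t)
    (hmono1 : ∀ s t t' : ℝ, 0 < s → 0 < t → t ≤ t' → φ s t ≤ φ s t')
    (a b : ℝ)
    (ha : Tendsto (fun t => φ 1 t) (nhdsWithin 0 (Set.Ioi 0)) (nhds a))
    (hb : Tendsto (fun t => φ 1 t / t) atTop (nhds b))
    (hconc : ConcaveOn ℝ (Set.Ioi 0) (fun t => φ 1 t)) :
    (∀ t : ℝ, 0 < t → 0 ≤ φ 1 t - max a (b * t)) ∧
    ConcaveOn ℝ (Set.Ioi 0) (fun t => φ 1 t - max a (b * t)) ∧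
    Tendsto (fun t => φ 1 t - max a (b * t)) (nhdsWithin 0 (Set.Ioi 0)) (nhds 0) ∧
    Tendsto (fun t => (φ 1 t - max a (b * t)) / t) atTop (nhds 0) := by
  -- a ≤ φ 1 t for all t > 0
  have hale : ∀ t : ℝ, 0 < t → a ≤ φ 1 t := by
    intro t ht
    refine le_of_tendsto ha ?_
    filter_upwards [self_mem_nhdsWithin,
      eventually_nhdsWithin_of_eventually_nhds (eventually_lt_nhds ht)] with s hs hst
    exact hmono1 1 s t one_pos hs hst.le
  -- φ 1 t / t = φ (1/t) 1 for t > 0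
  have hratio : ∀ t : ℝ, 0 < t → φ 1 t / t = φ (1/t) 1 := by
    intro t ht
    have := hhom t (1/t) 1 ht (by positivity) one_pos
    rw [mul_one_div_cancel ht.ne', mul_one] at this
    rw [this, mul_comm, mul_div_assoc, div_self ht.ne', mul_one]
  -- φ₁(t)/t is antitone: for 0 < t ≤ t', φ₁(t')/t' ≤ φ₁(t)/t
  have hanti : ∀ t t' : ℝ, 0 < t → t ≤ t' → φ 1 t' / t' ≤ φ 1 t / t := by
    intro t t' ht htt'
    have ht' : (0:ℝ) < t' := lt_of_lt_of_le ht htt'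
    rw [hratio t ht, hratio t' ht']
    exact hmono0 1 (1/t') (1/t) one_pos (by positivity)
      (one_div_le_one_div_of_le ht htt')
  -- b ≤ φ 1 t / t for all t > 0
  have hble : ∀ t : ℝ, 0 < t → b ≤ φ 1 t / t := by
    intro t ht
    refine le_of_tendsto hb ?_
    filter_upwards [eventually_ge_atTop t] with s hs
    exact hanti t s ht hs
  have hbt : ∀ t : ℝ, 0 < t → b * t ≤ φ 1 t := by
    intro t ht
    have := hble t ht
    calc b * t ≤ (φ 1 t / t) * t := by nlinarith
    _ = φ 1 t := by field_simp
  have hmain : ∀ t : ℝ, 0 < t → 0 ≤ φ 1 t - max a (b * t) := by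
    intro t ht
    have := max_le (hale t ht) (hbt t ht)
    linarith
  -- a ≥ 0, b ≥ 0
  have ha0 : 0 ≤ a := by
    refine ge_of_tendsto ha ?_
    filter_upwards [self_mem_nhdsWithin] with s hs
    exact hnonneg 1 s one_pos hs
  have hb0 : 0 ≤ b := by
    refine ge_of_tendsto hb ?_
    filter_upwards [eventually_gt_atTop 0] with s hs
    exact div_nonneg (hnonneg 1 s one_pos hs) hs.le
  refine ⟨hmain, ?_, ?_, ?_⟩
  · -- concavity
    have hcvx : ConvexOn ℝ (Set.Ioi 0) (fun t : ℝ => max a (b * t)) := by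
      have h1 : ConvexOn ℝ (Set.Ioi (0:ℝ)) (fun _ : ℝ => a) :=
        convexOn_const a (convex_Ioi 0)
      have h2 : ConvexOn ℝ (Set.Ioi (0:ℝ)) (fun t : ℝ => b * t) :=
        ⟨convex_Ioi 0, fun x _ y _ α β _ _ _ => le_of_eq (by simp only [smul_eq_mul]; ring)⟩
      exact h1.sup h2
    exact hconc.sub hcvx
  · -- limit at 0⁺
    have hM : Tendsto (fun t : ℝ => max a (b * t)) (nhdsWithin 0 (Set.Ioi 0)) (nhds a) := by
      have : Tendsto (fun t : ℝ => max a (b * t)) (nhds 0) (nhds (max a (b * 0))) :=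
        (Continuous.max continuous_const (continuous_const.mul continuous_id)).tendsto 0
      simpa [max_eq_left ha0] using this.mono_left nhdsWithin_le_nhds
    simpa using ha.sub hM
  · -- limit at ∞
    have hM : Tendsto (fun t : ℝ => max (a / t) b) atTop (nhds b) := by
      have h1 : Tendsto (fun t : ℝ => a / t) atTop (nhds 0) :=
        tendsto_const_nhds.div_atTop tendsto_id
      simpa [max_eq_right hb0] using h1.max (tendsto_const_nhds (x := b))
    have hsub : Tendsto (fun t : ℝ => φ 1 t / t - max (a / t) b) atTop (nhds 0) := by
      simpa using hb.sub hM
    refine hsub.congr' ?_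
    filter_upwards [eventually_gt_atTop (0:ℝ)] with t ht
    rw [eq_div_iff ht.ne', sub_mul, max_mul_of_nonneg _ _ ht.le,
      div_mul_cancel₀ _ ht.ne', div_mul_cancel₀ _ ht.ne']
end

section
/- Let E be a quasi-Banach lattice satisfying ‖max_{1≤i≤n}|x_i|‖ ≤ C·max_{|a_i|≤1}‖∑_{i=1}^n a_i x_i‖ for all finite families (x_i) ⊂ E (the K_{∞,1} property with constant C). Then for every quasi-Banach lattice F and every bounded linear operator T: F → E, T is (∞,1)-regular with ρ_{∞,1}(T) ≤ C‖T‖; that is, ‖max_{1≤i≤n}|Tx_i|‖ ≤ C‖T‖·‖∑_{i=1}^n|x_i|‖ for all (x_i)_{i=1}^n ⊂ F. -/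
/-- A quasi-normed lattice structure on a Riesz space `E`. -/
structure QuasiNormLattice (E : Type*) [Lattice E] [AddCommGroup E] [Module ℝ E] where
  q : E → ℝ
  nonneg : ∀ x, 0 ≤ q x
  eq_zero : ∀ x, q x = 0 → x = 0
  smul : ∀ (c : ℝ) (x : E), q (c • x) = |c| * q x
  quasiAdd : ∃ C : ℝ, 1 ≤ C ∧ ∀ x y, q (x + y) ≤ C * (q x + q y)
  mono : ∀ x y : E, |x| ≤ |y| → q x ≤ q y

/-!
Whenever `|aᵢ| ≤ 1`, the lattice inequality `|∑ aᵢ xᵢ| ≤ ∑ |xᵢ|` and boundedness of `T` give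
`‖∑ aᵢ T xᵢ‖ = ‖T (∑ aᵢ xᵢ)‖ ≤ M ‖∑ |xᵢ|‖`; the `K_{∞,1}` property of `E`, applied to the family
`(T xᵢ)` with `S = M ‖∑ |xᵢ|‖`, turns this into the bound on `‖⋁ |T xᵢ|‖`.
-/

section LatticeModule

variable {R F : Type*} [Ring R] [LinearOrder R] [IsOrderedRing R]
  [Lattice F] [AddCommGroup F] [CovariantClass F F (· + ·) (· ≤ ·)]
  [Module R F] [PosSMulMono R F] [SMulPosMono R F]

theorem smul_le_abs_of_abs_le_one {a : R} (ha : |a| ≤ 1) (x : F) : a • x ≤ |x| := by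
  rcases le_total 0 a with h | h
  · calc a • x ≤ a • |x| := smul_le_smul_of_nonneg_left (le_abs_self x) h
      _ ≤ (1 : R) • |x| := smul_le_smul_of_nonneg_right ((le_abs_self a).trans ha) (abs_nonneg x)
      _ = |x| := one_smul R _
  · calc a • x = (-a) • -x := (neg_smul_neg a x).symm
      _ ≤ (-a) • |x| := smul_le_smul_of_nonneg_left (neg_le_abs x) (neg_nonneg.2 h)
      _ ≤ (1 : R) • |x| := smul_le_smul_of_nonneg_right ((neg_le_abs a).trans ha) (abs_nonneg x)
      _ = |x| := one_smul R _

theorem abs_smul_le_of_abs_le_one {a : R} (ha : |a| ≤ 1) (x : F) : |a • x| ≤ |x| := by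
  refine abs_le'.2 ⟨smul_le_abs_of_abs_le_one ha x, ?_⟩
  rw [← neg_smul]
  exact smul_le_abs_of_abs_le_one (by rwa [abs_neg]) x

theorem abs_sum_smul_le_sum_abs {ι : Type*} (s : Finset ι) {a : ι → R}
    (ha : ∀ i ∈ s, |a i| ≤ 1) (x : ι → F) : |∑ i ∈ s, a i • x i| ≤ ∑ i ∈ s, |x i| := by
  have : IsOrderedAddMonoid F := { add_le_add_left := fun _ _ h c => add_le_add_left h c }
  calc |∑ i ∈ s, a i • x i| ≤ ∑ i ∈ s, |a i • x i| :=
        Finset.le_sum_of_subadditive _ abs_zero.le abs_add_le s _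
    _ ≤ ∑ i ∈ s, |x i| :=
        Finset.sum_le_sum fun i hi => abs_smul_le_of_abs_le_one (ha i hi) (x i)

end LatticeModule

theorem QuasiNormLattice.q_sum_smul_le_q_sum_abs {F ι : Type*} [Lattice F] [AddCommGroup F]
    [CovariantClass F F (· + ·) (· ≤ ·)] [Module ℝ F] [PosSMulMono ℝ F] [SMulPosMono ℝ F]
    (Q : QuasiNormLattice F) (s : Finset ι) {a : ι → ℝ} (ha : ∀ i ∈ s, |a i| ≤ 1)
    (x : ι → F) : Q.q (∑ i ∈ s, a i • x i) ≤ Q.q (∑ i ∈ s, |x i|) := by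
  refine Q.mono _ _ ?_
  rw [abs_of_nonneg (Finset.sum_nonneg fun i _ => abs_nonneg (x i))]
  exact abs_sum_smul_le_sum_abs s ha x

theorem stmt9_general {E F : Type*} [Lattice E] [AddCommGroup E] [Module ℝ E]
    [Lattice F] [AddCommGroup F] [Module ℝ F]
    [CovariantClass F F (· + ·) (· ≤ ·)]
    [PosSMulMono ℝ F] [SMulPosMono ℝ F]
    (QE : QuasiNormLattice E) (QF : QuasiNormLattice F) (C : ℝ)
    (hK : ∀ (n : ℕ) (x : Fin (n + 1) → E) (S : ℝ),
      (∀ a : Fin (n + 1) → ℝ, (∀ i, |a i| ≤ 1) → QE.q (∑ i, a i • x i) ≤ S) →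
      QE.q (Finset.univ.sup' Finset.univ_nonempty (fun i => |x i|)) ≤ C * S)
    (T : F →ₗ[ℝ] E) (M : ℝ) (hM : 0 ≤ M)
    (hT : ∀ x : F, QE.q (T x) ≤ M * QF.q x) :
    ∀ (n : ℕ) (x : Fin (n + 1) → F),
      QE.q (Finset.univ.sup' Finset.univ_nonempty (fun i => |T (x i)|)) ≤
        C * M * QF.q (∑ i, |x i|) := by
  intro n x
  rw [mul_assoc]
  refine hK n (fun i => T (x i)) _ fun a ha => ?_
  calc QE.q (∑ i, a i • T (x i)) = QE.q (T (∑ i, a i • x i)) := by simp only [map_sum, map_smul]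
    _ ≤ M * QF.q (∑ i, a i • x i) := hT _
    _ ≤ M * QF.q (∑ i, |x i|) :=
        mul_le_mul_of_nonneg_left (QF.q_sum_smul_le_q_sum_abs _ (fun i _ => ha i) x) hM

/-- If `E` has the `K_{∞,1}` property with constant `C`
(`‖max|x_i|‖ ≤ C·max_{|a_i|≤1}‖∑ a_i x_i‖`), then every bounded linear operator
`T : F → E` from a quasi-Banach lattice `F` (with bound `M`, i.e. `‖Tx‖ ≤ M‖x‖`) is
`(∞,1)`-regular with constant `C·M`: `‖⋁|T x_i|‖ ≤ C·M·‖∑|x_i|‖`. -/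
theorem stmt9 {E F : Type*} [Lattice E] [AddCommGroup E] [Module ℝ E]
    [CovariantClass E E (· + ·) (· ≤ ·)]
    [Lattice F] [AddCommGroup F] [Module ℝ F]
    [CovariantClass F F (· + ·) (· ≤ ·)]
    [PosSMulMono ℝ F] [SMulPosMono ℝ F]
    (QE : QuasiNormLattice E) (QF : QuasiNormLattice F) (C : ℝ)
    (hK : ∀ (n : ℕ) (x : Fin (n + 1) → E) (S : ℝ),
      (∀ a : Fin (n + 1) → ℝ, (∀ i, |a i| ≤ 1) → QE.q (∑ i, a i • x i) ≤ S) →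
      QE.q (Finset.univ.sup' Finset.univ_nonempty (fun i => |x i|)) ≤ C * S)
    (T : F →ₗ[ℝ] E) (M : ℝ) (hM : 0 ≤ M)
    (hT : ∀ x : F, QE.q (T x) ≤ M * QF.q x) :
    ∀ (n : ℕ) (x : Fin (n + 1) → F),
      QE.q (Finset.univ.sup' Finset.univ_nonempty (fun i => |T (x i)|)) ≤
        C * M * QF.q (∑ i, |x i|) :=
  stmt9_general QE QF C hK T M hM hT
end

section
/- Let X be a vector lattice with the Riesz decomposition property, and let z₁,…,zₙ, u, v ∈ X with u,v ≥ 0 and ∑_{i=1}^n |z_i| ≤ u + v. Then there exist u_i, v_i ∈ X with z_i = u_i + v_i for each i, ∑_{i=1}^n |u_i| ≤ 2u and ∑_{i=1}^n |v_i| ≤ 2v. -/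
/-!
Write `zᵢ = zᵢ⁺ - zᵢ⁻`. Both families of parts are positive with sums at most `u + v`, and
the Riesz decomposition `x = x ⊓ y + (x - y)⁺`, applied one term at a time against what is
left of `u` and `v`, splits them as `zᵢ⁺ = aᵢ + bᵢ`, `zᵢ⁻ = cᵢ + dᵢ` with
`aᵢ, bᵢ, cᵢ, dᵢ ≥ 0`, `∑ aᵢ, ∑ cᵢ ≤ u` and `∑ bᵢ, ∑ dᵢ ≤ v`. Take `uᵢ = aᵢ - cᵢ` and
`vᵢ = bᵢ - dᵢ`; the factor 2 comes from `|aᵢ - cᵢ| ≤ aᵢ + cᵢ`.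
-/

section LatticeOrderedGroup

variable {X : Type*} [Lattice X] [AddCommGroup X] [IsOrderedAddMonoid X]

theorem exists_eq_add_of_le_add {x y z : X} (hx : 0 ≤ x) (hy : 0 ≤ y) (hz : 0 ≤ z)
    (h : x ≤ y + z) : ∃ a b, x = a + b ∧ 0 ≤ a ∧ a ≤ y ∧ 0 ≤ b ∧ b ≤ z := by
  refine ⟨x ⊓ y, (x - y)⁺, ?_, le_inf hx hy, inf_le_right, posPart_nonneg _, ?_⟩
  · rw [inf_eq_sub_posPart_sub, sub_add_cancel]
  · exact sup_le (sub_le_iff_le_add'.2 h) hz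

theorem Finset.exists_eq_add_of_sum_le_add {ι : Type*} [DecidableEq ι] (s : Finset ι)
    {x : ι → X} (hx : ∀ i ∈ s, 0 ≤ x i) {y z : X} (hy : 0 ≤ y) (hz : 0 ≤ z)
    (h : ∑ i ∈ s, x i ≤ y + z) :
    ∃ a b : ι → X, (∀ i ∈ s, x i = a i + b i ∧ 0 ≤ a i ∧ 0 ≤ b i) ∧
      ∑ i ∈ s, a i ≤ y ∧ ∑ i ∈ s, b i ≤ z := by
  induction s using Finset.induction_on generalizing y z with
  | empty => exact ⟨0, 0, by simp, by simpa using hy, by simpa using hz⟩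
  | insert j s hj ih =>
    rw [Finset.sum_insert hj] at h
    have hxs : 0 ≤ ∑ i ∈ s, x i :=
      Finset.sum_nonneg fun i hi ↦ hx i (Finset.mem_insert_of_mem hi)
    obtain ⟨a₀, b₀, hxj, ha₀, ha₀y, hb₀, hb₀z⟩ :=
      exists_eq_add_of_le_add (hx j (Finset.mem_insert_self j s)) hy hz
        (le_of_add_le_of_nonneg_left h hxs)
    have hrest : ∑ i ∈ s, x i ≤ (y - a₀) + (z - b₀) := by
      rw [sub_add_sub_comm, ← hxj]
      exact le_sub_iff_add_le'.2 h
    obtain ⟨a, b, hab, hay, hbz⟩ :=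
      ih (fun i hi ↦ hx i (Finset.mem_insert_of_mem hi)) (sub_nonneg.2 ha₀y)
        (sub_nonneg.2 hb₀z) hrest
    refine ⟨Function.update a j a₀, Function.update b j b₀, ?_, ?_, ?_⟩
    · intro i hi
      rcases Finset.mem_insert.1 hi with rfl | hi
      · simpa using ⟨hxj, ha₀, hb₀⟩
      · have hij : i ≠ j := ne_of_mem_of_not_mem hi hj
        simpa [hij] using hab i hi
    · rw [Finset.sum_insert hj, Function.update_self, Finset.sum_update_of_notMem hj]
      exact le_sub_iff_add_le'.1 hay
    · rw [Finset.sum_insert hj, Function.update_self, Finset.sum_update_of_notMem hj]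
      exact le_sub_iff_add_le'.1 hbz

theorem Finset.sum_abs_sub_le_sum_add_sum {ι : Type*} (s : Finset ι) {a c : ι → X}
    (ha : ∀ i ∈ s, 0 ≤ a i) (hc : ∀ i ∈ s, 0 ≤ c i) :
    ∑ i ∈ s, |a i - c i| ≤ ∑ i ∈ s, a i + ∑ i ∈ s, c i := by
  rw [← Finset.sum_add_distrib]
  refine Finset.sum_le_sum fun i hi ↦ ?_
  calc |a i - c i| ≤ |a i| + |-c i| := by rw [sub_eq_add_neg]; exact abs_add_le _ _
    _ = a i + c i := by rw [abs_neg, abs_of_nonneg (ha i hi), abs_of_nonneg (hc i hi)]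

end LatticeOrderedGroup

theorem stmt12_general {X : Type*} [Lattice X] [AddCommGroup X]
    [CovariantClass X X (· + ·) (· ≤ ·)]
    (n : ℕ) (z : Fin n → X) (u v : X) (hu : 0 ≤ u) (hv : 0 ≤ v)
    (hsum : ∑ i, |z i| ≤ u + v) :
    ∃ uu vv : Fin n → X, (∀ i, z i = uu i + vv i) ∧
      ∑ i, |uu i| ≤ 2 • u ∧ ∑ i, |vv i| ≤ 2 • v := by
  have : IsOrderedAddMonoid X := { add_le_add_left := fun _ _ h c ↦ add_le_add_left h c }
  have hpos : ∑ i, (z i)⁺ ≤ u + v :=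
    (Finset.sum_le_sum fun i _ ↦ sup_le (le_abs_self (z i)) (abs_nonneg _)).trans hsum
  have hneg : ∑ i, (z i)⁻ ≤ u + v :=
    (Finset.sum_le_sum fun i _ ↦ sup_le (neg_le_abs (z i)) (abs_nonneg _)).trans hsum
  obtain ⟨a, b, hab, hau, hbv⟩ := Finset.univ.exists_eq_add_of_sum_le_add
    (fun i _ ↦ posPart_nonneg (z i)) hu hv hpos
  obtain ⟨c, d, hcd, hcu, hdv⟩ := Finset.univ.exists_eq_add_of_sum_le_add
    (fun i _ ↦ negPart_nonneg (z i)) hu hv hneg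
  refine ⟨a - c, b - d, fun i ↦ ?_, ?_, ?_⟩
  · rw [← posPart_sub_negPart (z i), (hab i (Finset.mem_univ i)).1,
      (hcd i (Finset.mem_univ i)).1]
    simp only [Pi.sub_apply]
    abel
  · calc ∑ i, |(a - c) i| ≤ ∑ i, a i + ∑ i, c i :=
          Finset.univ.sum_abs_sub_le_sum_add_sum (fun i hi ↦ (hab i hi).2.1)
            fun i hi ↦ (hcd i hi).2.1
      _ ≤ 2 • u := two_nsmul u ▸ add_le_add hau hcu
  · calc ∑ i, |(b - d) i| ≤ ∑ i, b i + ∑ i, d i :=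
          Finset.univ.sum_abs_sub_le_sum_add_sum (fun i hi ↦ (hab i hi).2.2)
            fun i hi ↦ (hcd i hi).2.2
      _ ≤ 2 • v := two_nsmul v ▸ add_le_add hbv hdv

/-- Riesz decomposition for finite families: in a vector lattice, if
`∑ |z_i| ≤ u + v` with `u, v ≥ 0`, then `z_i = u_i + v_i` with `∑|u_i| ≤ 2u` and
`∑|v_i| ≤ 2v`. -/
theorem stmt12 {X : Type*} [Lattice X] [AddCommGroup X] [Module ℝ X]
    [CovariantClass X X (· + ·) (· ≤ ·)]
    (n : ℕ) (z : Fin n → X) (u v : X) (hu : 0 ≤ u) (hv : 0 ≤ v)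
    (hsum : ∑ i, |z i| ≤ u + v) :
    ∃ uu vv : Fin n → X, (∀ i, z i = uu i + vv i) ∧
      ∑ i, |uu i| ≤ 2 • u ∧ ∑ i, |vv i| ≤ 2 • v :=
  stmt12_general n z u v hu hv hsum
end

section
/- Let φ ∈ 𝒫 with φ(1,1)=1 and suppose φ₁(t)=φ(1,t) is concave on (0,∞). Fix q > 1. Suppose (t_{2k+1})_{k=-M}^{N} and numbers are chosen via the Brudnyi–Kruglyak construction so that φ₁(t_{2k})/t_{2k} = q·φ₁(t_{2k+1})/t_{2k+1} and φ₁(t_{2k+2}) = q·φ₁(t_{2k+1}) for all k. Then for every t ∈ [t_{2k}, t_{2k+2}], φ₁(t) ≤ q·φ₁(t_{2k+1})·min(1, t/t_{2k+1}). -/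
open Set

section Homogeneous

variable {φ : ℝ → ℝ → ℝ}

theorem div_self_eq_inv_one_of_homogeneous
    (hhom : ∀ l s t : ℝ, 0 < l → 0 < s → 0 < t → φ (l * s) (l * t) = l * φ s t)
    {x : ℝ} (hx : 0 < x) : φ 1 x / x = φ x⁻¹ 1 := by
  have h := hhom x⁻¹ 1 x (inv_pos.2 hx) one_pos hx
  rw [mul_one, inv_mul_cancel₀ hx.ne'] at h
  rw [h, div_eq_inv_mul]

theorem antitoneOn_div_self_of_homogeneous
    (hhom : ∀ l s t : ℝ, 0 < l → 0 < s → 0 < t → φ (l * s) (l * t) = l * φ s t)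
    (hmono0 : ∀ t s s' : ℝ, 0 < t → 0 < s → s ≤ s' → φ s t ≤ φ s' t) :
    AntitoneOn (fun x => φ 1 x / x) (Ioi 0) := by
  intro x hx y hy hxy
  simp only [div_self_eq_inv_one_of_homogeneous hhom hx,
    div_self_eq_inv_one_of_homogeneous hhom hy]
  exact hmono0 1 y⁻¹ x⁻¹ one_pos (inv_pos.2 hy) (inv_anti₀ hx hxy)

end Homogeneous

/-- Below `b` the bound comes from the decreasing slope `f t / t ≤ f a / a`,
above `b` from the monotonicity `f t ≤ f c`. -/
theorem le_mul_min_one_div_of_antitoneOn_div {f : ℝ → ℝ}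
    (hmono : MonotoneOn f (Ioi 0)) (hanti : AntitoneOn (fun x => f x / x) (Ioi 0))
    {q a b c : ℝ} (ha : 0 < a) (hab : a ≤ b)
    (h1 : f a / a = q * (f b / b)) (h2 : f c = q * f b)
    {t : ℝ} (hat : a ≤ t) (htc : t ≤ c) :
    f t ≤ q * f b * min 1 (t / b) := by
  have hb : 0 < b := ha.trans_le hab
  have ht : 0 < t := ha.trans_le hat
  rcases le_total t b with htb | hbt
  · rw [min_eq_right ((div_le_one hb).2 htb)]
    have hslope : f t / t ≤ q * (f b / b) := h1 ▸ hanti ha ht hat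
    calc f t = t * (f t / t) := by field_simp
      _ ≤ t * (q * (f b / b)) := mul_le_mul_of_nonneg_left hslope ht.le
      _ = q * f b * (t / b) := by ring
  · rw [min_eq_left ((one_le_div hb).2 hbt), mul_one, ← h2]
    exact hmono ht (ht.trans_le htc) htc

theorem stmt14_general (φ : ℝ → ℝ → ℝ)
    (hhom : ∀ l s t : ℝ, 0 < l → 0 < s → 0 < t → φ (l * s) (l * t) = l * φ s t)
    (hmono0 : ∀ t s s' : ℝ, 0 < t → 0 < s → s ≤ s' → φ s t ≤ φ s' t)
    (hmono1 : ∀ s t t' : ℝ, 0 < s → 0 < t → t ≤ t' → φ s t ≤ φ s t')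
    (q : ℝ)
    (a b c : ℝ) (ha : 0 < a) (hab : a ≤ b)
    (h1 : φ 1 a / a = q * (φ 1 b / b))
    (h2 : φ 1 c = q * φ 1 b) :
    ∀ t : ℝ, a ≤ t → t ≤ c → φ 1 t ≤ q * φ 1 b * min 1 (t / b) := by
  have hmono : MonotoneOn (φ 1) (Ioi 0) := fun x hx _ _ hxy => hmono1 1 x _ one_pos hx hxy
  exact fun t hat htc => le_mul_min_one_div_of_antitoneOn_div hmono
    (antitoneOn_div_self_of_homogeneous hhom hmono0) ha hab h1 h2 hat htc

/-- Brudnyi–Kruglyak construction: with `φ₁ = φ(1,·)` concave, `q > 1`, and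
points `a = t_{2k} ≤ b = t_{2k+1} ≤ c = t_{2k+2}` satisfying `φ₁(a)/a = q·φ₁(b)/b` and
`φ₁(c) = q·φ₁(b)`, every `t ∈ [a,c]` satisfies `φ₁(t) ≤ q·φ₁(b)·min(1, t/b)`. -/
theorem stmt14 (φ : ℝ → ℝ → ℝ)
    (hnonneg : ∀ s t : ℝ, 0 < s → 0 < t → 0 ≤ φ s t)
    (hhom : ∀ l s t : ℝ, 0 < l → 0 < s → 0 < t → φ (l * s) (l * t) = l * φ s t)
    (hmono0 : ∀ t s s' : ℝ, 0 < t → 0 < s → s ≤ s' → φ s t ≤ φ s' t)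
    (hmono1 : ∀ s t t' : ℝ, 0 < s → 0 < t → t ≤ t' → φ s t ≤ φ s t')
    (hnorm : φ 1 1 = 1)
    (hconc : ConcaveOn ℝ (Set.Ioi 0) (fun t => φ 1 t))
    (q : ℝ) (hq : 1 < q)
    (a b c : ℝ) (ha : 0 < a) (hab : a ≤ b) (hbc : b ≤ c)
    (h1 : φ 1 a / a = q * (φ 1 b / b))
    (h2 : φ 1 c = q * φ 1 b) :
    ∀ t : ℝ, a ≤ t → t ≤ c → φ 1 t ≤ q * φ 1 b * min 1 (t / b) :=
  stmt14_general φ hhom hmono0 hmono1 q a b c ha hab h1 h2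
end

section
/- Let φ, η, ϕ ∈ 𝒫 with φ = ϕ + η pointwise on (0,∞)². Then for any compatible pair (X₀,X₁) of quasi-Banach lattices, φ(X₀,X₁) = ϕ(X₀,X₁) + η(X₀,X₁) with equivalence of quasi-norms with constant at most 2: every x ∈ φ(X₀,X₁) with ‖x‖_{φ(X₀,X₁)} < 1 can be written x = y + z with ‖y‖_{ϕ(X₀,X₁)} ≤ 1 and ‖z‖_{η(X₀,X₁)} ≤ 1, and conversely ‖y+z‖_{φ(X₀,X₁)} ≤ 2 max(‖y‖_{ϕ(X₀,X₁)}, ‖z‖_{η(X₀,X₁)}). -/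
/-!
The decomposition is the Riesz decomposition property of `ℝ`, applied pointwise: if
`|x| ≤ l ϕ(x₀,x₁) + l η(x₀,x₁)`, clamping `x` to `[-l ϕ(x₀,x₁), l ϕ(x₀,x₁)]` gives `y`, and
`z = x - y` is dominated by `l η(x₀,x₁)`, with the same pair `(x₀,x₁)` serving both pieces.

For the converse, take witnesses `(u₀,u₁)` for `y` and `(v₀,v₁)` for `z` and average them:
`w = (u + v)/2` still lies in the unit balls, and homogeneity with monotonicity give
`ϕ(u) ≤ 2 ϕ(w)` and `η(v) ≤ 2 η(w)`, so `|y + z| ≤ 2 l (ϕ + η)(w) = 2 l φ(w)`.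
-/

open scoped ENNReal NNReal

/-- The Calderón–Lozanovskii quasi-norm
`‖x‖ = inf{λ > 0 : |x| ≤ λ·φ(x₀,x₁), ‖x₀‖_{X₀} ≤ 1, ‖x₁‖_{X₁} ≤ 1}` for a compatible
pair of quasi-Banach function lattices over `α` encoded by `ℝ≥0∞`-valued lattice
quasi-norms `q₀, q₁` on the ambient function space (infimum `∞` if no such `λ`). -/
noncomputable def CLnorm {α : Type*} (φ : ℝ → ℝ → ℝ) (q0 q1 : (α → ℝ) → ℝ≥0∞)
    (x : α → ℝ) : ℝ≥0∞ :=
  ⨅ (l : ℝ≥0) (_ : ∃ x0 x1 : α → ℝ, (∀ a, 0 ≤ x0 a) ∧ (∀ a, 0 ≤ x1 a) ∧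
      q0 x0 ≤ 1 ∧ q1 x1 ≤ 1 ∧ ∀ a, |x a| ≤ (l : ℝ) * φ (x0 a) (x1 a)), (l : ℝ≥0∞)

theorem exists_abs_le_abs_sub_le {x c d : ℝ} (hc : 0 ≤ c) (hd : 0 ≤ d) (h : |x| ≤ c + d) :
    ∃ y, |y| ≤ c ∧ |x - y| ≤ d := by
  refine ⟨max (-c) (min x c), ?_, ?_⟩ <;> rw [abs_le] at * <;>
    simp only [min_def, max_def] <;> split_ifs <;> constructor <;> linarith

section Homogeneous

variable {ψ : ℝ → ℝ → ℝ}

theorem apply_le_apply_add (hmono0 : ∀ t s s' : ℝ, 0 ≤ t → 0 ≤ s → s ≤ s' → ψ s t ≤ ψ s' t)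
    (hmono1 : ∀ s t t' : ℝ, 0 ≤ s → 0 ≤ t → t ≤ t' → ψ s t ≤ ψ s t')
    {s t s' t' : ℝ} (hs : 0 ≤ s) (ht : 0 ≤ t) (hs' : 0 ≤ s') (ht' : 0 ≤ t') :
    ψ s t ≤ ψ (s + s') (t + t') :=
  calc ψ s t ≤ ψ (s + s') t := hmono0 t s _ ht hs (le_add_of_nonneg_right hs')
    _ ≤ ψ (s + s') (t + t') := hmono1 _ t _ (add_nonneg hs hs') ht (le_add_of_nonneg_right ht')

theorem apply_le_two_mul_apply_half_add
    (hhom : ∀ l s t : ℝ, 0 ≤ l → 0 ≤ s → 0 ≤ t → ψ (l * s) (l * t) = l * ψ s t)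
    (hmono0 : ∀ t s s' : ℝ, 0 ≤ t → 0 ≤ s → s ≤ s' → ψ s t ≤ ψ s' t)
    (hmono1 : ∀ s t t' : ℝ, 0 ≤ s → 0 ≤ t → t ≤ t' → ψ s t ≤ ψ s t')
    {s t s' t' : ℝ} (hs : 0 ≤ s) (ht : 0 ≤ t) (hs' : 0 ≤ s') (ht' : 0 ≤ t') :
    ψ s t ≤ 2 * ψ (2⁻¹ * (s + s')) (2⁻¹ * (t + t')) := by
  rw [hhom _ _ _ (by norm_num) (add_nonneg hs hs') (add_nonneg ht ht'), ← mul_assoc,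
    mul_inv_cancel₀ two_ne_zero, one_mul]
  exact apply_le_apply_add hmono0 hmono1 hs ht hs' ht'

end Homogeneous

theorem smul_half_add_le_one {E : Type*} [AddCommGroup E] [Module ℝ E] {q : E → ℝ≥0∞}
    (hhom : ∀ (r : ℝ≥0) (x : E), q ((r : ℝ) • x) = r * q x)
    (hadd : ∀ x y : E, q (x + y) ≤ q x + q y) {u v : E} (hu : q u ≤ 1) (hv : q v ≤ 1) :
    q (((2⁻¹ : ℝ≥0) : ℝ) • (u + v)) ≤ 1 := by
  rw [hhom, ENNReal.coe_inv two_ne_zero, ENNReal.coe_ofNat]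
  calc (2⁻¹ : ℝ≥0∞) * q (u + v) ≤ 2⁻¹ * (1 + 1) := by
        gcongr; exact (hadd u v).trans (add_le_add hu hv)
    _ = 1 := by rw [one_add_one_eq_two, ENNReal.inv_mul_cancel two_ne_zero ENNReal.ofNat_ne_top]

section CalderonLozanovskii

variable {α : Type*}

/-- `CLnorm φ q0 q1 x` is by definition `⨅ (l) (_ : CLAdmissible φ q0 q1 l x), (l : ℝ≥0∞)`. -/
def CLAdmissible (φ : ℝ → ℝ → ℝ) (q0 q1 : (α → ℝ) → ℝ≥0∞) (l : ℝ≥0) (x : α → ℝ) : Prop :=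
  ∃ x0 x1 : α → ℝ, (∀ a, 0 ≤ x0 a) ∧ (∀ a, 0 ≤ x1 a) ∧
    q0 x0 ≤ 1 ∧ q1 x1 ≤ 1 ∧ ∀ a, |x a| ≤ (l : ℝ) * φ (x0 a) (x1 a)

variable {φ ϕ η : ℝ → ℝ → ℝ} {q0 q1 : (α → ℝ) → ℝ≥0∞} {l : ℝ≥0} {x y z : α → ℝ}

theorem CLnorm_le_of_admissible (h : CLAdmissible φ q0 q1 l x) : CLnorm φ q0 q1 x ≤ l :=
  iInf₂_le l h

theorem exists_admissible_of_CLnorm_lt {c : ℝ≥0∞} (h : CLnorm φ q0 q1 x < c) :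
    ∃ l : ℝ≥0, CLAdmissible φ q0 q1 l x ∧ (l : ℝ≥0∞) < c := by
  simpa only [CLnorm, CLAdmissible, iInf_lt_iff, exists_prop] using h

theorem CLAdmissible.mono (hφ : ∀ s t : ℝ, 0 ≤ s → 0 ≤ t → 0 ≤ φ s t) {l' : ℝ≥0}
    (hl : l ≤ l') (h : CLAdmissible φ q0 q1 l x) : CLAdmissible φ q0 q1 l' x := by
  obtain ⟨x0, x1, hx0, hx1, hq0, hq1, hx⟩ := h
  exact ⟨x0, x1, hx0, hx1, hq0, hq1, fun a =>
    (hx a).trans (mul_le_mul_of_nonneg_right (by exact_mod_cast hl) (hφ _ _ (hx0 a) (hx1 a)))⟩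

theorem CLAdmissible.exists_add
    (hϕ : ∀ s t : ℝ, 0 ≤ s → 0 ≤ t → 0 ≤ ϕ s t) (hη : ∀ s t : ℝ, 0 ≤ s → 0 ≤ t → 0 ≤ η s t)
    (hadd : ∀ s t : ℝ, 0 ≤ s → 0 ≤ t → φ s t = ϕ s t + η s t) (h : CLAdmissible φ q0 q1 l x) :
    ∃ y z, x = y + z ∧ CLAdmissible ϕ q0 q1 l y ∧ CLAdmissible η q0 q1 l z := by
  obtain ⟨x0, x1, hx0, hx1, hq0, hq1, hx⟩ := h
  have split (a : α) : ∃ r, |r| ≤ l * ϕ (x0 a) (x1 a) ∧ |x a - r| ≤ l * η (x0 a) (x1 a) := by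
    refine exists_abs_le_abs_sub_le (mul_nonneg l.2 (hϕ _ _ (hx0 a) (hx1 a)))
      (mul_nonneg l.2 (hη _ _ (hx0 a) (hx1 a))) ?_
    rw [← mul_add, ← hadd _ _ (hx0 a) (hx1 a)]
    exact hx a
  choose y hy hxy using split
  exact ⟨y, x - y, (add_sub_cancel y x).symm, ⟨x0, x1, hx0, hx1, hq0, hq1, hy⟩,
    ⟨x0, x1, hx0, hx1, hq0, hq1, hxy⟩⟩

theorem CLAdmissible.add
    (hq0hom : ∀ (r : ℝ≥0) (x : α → ℝ), q0 ((r : ℝ) • x) = r * q0 x)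
    (hq1hom : ∀ (r : ℝ≥0) (x : α → ℝ), q1 ((r : ℝ) • x) = r * q1 x)
    (hq0add : ∀ x y : α → ℝ, q0 (x + y) ≤ q0 x + q0 y)
    (hq1add : ∀ x y : α → ℝ, q1 (x + y) ≤ q1 x + q1 y)
    (hϕhom : ∀ l s t : ℝ, 0 ≤ l → 0 ≤ s → 0 ≤ t → ϕ (l * s) (l * t) = l * ϕ s t)
    (hϕmono0 : ∀ t s s' : ℝ, 0 ≤ t → 0 ≤ s → s ≤ s' → ϕ s t ≤ ϕ s' t)
    (hϕmono1 : ∀ s t t' : ℝ, 0 ≤ s → 0 ≤ t → t ≤ t' → ϕ s t ≤ ϕ s t')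
    (hηhom : ∀ l s t : ℝ, 0 ≤ l → 0 ≤ s → 0 ≤ t → η (l * s) (l * t) = l * η s t)
    (hηmono0 : ∀ t s s' : ℝ, 0 ≤ t → 0 ≤ s → s ≤ s' → η s t ≤ η s' t)
    (hηmono1 : ∀ s t t' : ℝ, 0 ≤ s → 0 ≤ t → t ≤ t' → η s t ≤ η s t')
    (hadd : ∀ s t : ℝ, 0 ≤ s → 0 ≤ t → φ s t = ϕ s t + η s t)
    (hy : CLAdmissible ϕ q0 q1 l y) (hz : CLAdmissible η q0 q1 l z) :
    CLAdmissible φ q0 q1 (2 * l) (y + z) := by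
  obtain ⟨u0, u1, hu0, hu1, hqu0, hqu1, hyu⟩ := hy
  obtain ⟨v0, v1, hv0, hv1, hqv0, hqv1, hzv⟩ := hz
  have hw0 (a : α) : 0 ≤ (2⁻¹ : ℝ) * (u0 a + v0 a) := by have := hu0 a; have := hv0 a; positivity
  have hw1 (a : α) : 0 ≤ (2⁻¹ : ℝ) * (u1 a + v1 a) := by have := hu1 a; have := hv1 a; positivity
  refine ⟨((2⁻¹ : ℝ≥0) : ℝ) • (u0 + v0), ((2⁻¹ : ℝ≥0) : ℝ) • (u1 + v1),
    fun a => by simpa using hw0 a, fun a => by simpa using hw1 a,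
    smul_half_add_le_one hq0hom hq0add hqu0 hqv0, smul_half_add_le_one hq1hom hq1add hqu1 hqv1,
    fun a => ?_⟩
  have hϕw := apply_le_two_mul_apply_half_add hϕhom hϕmono0 hϕmono1 (hu0 a) (hu1 a) (hv0 a) (hv1 a)
  have hηw := apply_le_two_mul_apply_half_add hηhom hηmono0 hηmono1 (hv0 a) (hv1 a) (hu0 a) (hu1 a)
  rw [add_comm (v0 a), add_comm (v1 a)] at hηw
  simp only [Pi.add_apply, Pi.smul_apply, smul_eq_mul, NNReal.coe_mul, NNReal.coe_ofNat,
    NNReal.coe_inv]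
  rw [hadd _ _ (hw0 a) (hw1 a)]
  calc |y a + z a| ≤ |y a| + |z a| := abs_add_le _ _
    _ ≤ l * ϕ (u0 a) (u1 a) + l * η (v0 a) (v1 a) := add_le_add (hyu a) (hzv a)
    _ ≤ l * (2 * ϕ _ _) + l * (2 * η _ _) := by gcongr
    _ = 2 * l * (ϕ _ _ + η _ _) := by ring

theorem exists_add_CLnorm_le_one
    (hϕ : ∀ s t : ℝ, 0 ≤ s → 0 ≤ t → 0 ≤ ϕ s t) (hη : ∀ s t : ℝ, 0 ≤ s → 0 ≤ t → 0 ≤ η s t)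
    (hadd : ∀ s t : ℝ, 0 ≤ s → 0 ≤ t → φ s t = ϕ s t + η s t) (hx : CLnorm φ q0 q1 x < 1) :
    ∃ y z, x = y + z ∧ CLnorm ϕ q0 q1 y ≤ 1 ∧ CLnorm η q0 q1 z ≤ 1 := by
  obtain ⟨l, hl, hl1⟩ := exists_admissible_of_CLnorm_lt hx
  obtain ⟨y, z, rfl, hy, hz⟩ := hl.exists_add hϕ hη hadd
  exact ⟨y, z, rfl, (CLnorm_le_of_admissible hy).trans hl1.le,
    (CLnorm_le_of_admissible hz).trans hl1.le⟩

theorem CLnorm_add_le_two_mul_max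
    (hq0hom : ∀ (r : ℝ≥0) (x : α → ℝ), q0 ((r : ℝ) • x) = r * q0 x)
    (hq1hom : ∀ (r : ℝ≥0) (x : α → ℝ), q1 ((r : ℝ) • x) = r * q1 x)
    (hq0add : ∀ x y : α → ℝ, q0 (x + y) ≤ q0 x + q0 y)
    (hq1add : ∀ x y : α → ℝ, q1 (x + y) ≤ q1 x + q1 y)
    (hϕ : ∀ s t : ℝ, 0 ≤ s → 0 ≤ t → 0 ≤ ϕ s t)
    (hϕhom : ∀ l s t : ℝ, 0 ≤ l → 0 ≤ s → 0 ≤ t → ϕ (l * s) (l * t) = l * ϕ s t)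
    (hϕmono0 : ∀ t s s' : ℝ, 0 ≤ t → 0 ≤ s → s ≤ s' → ϕ s t ≤ ϕ s' t)
    (hϕmono1 : ∀ s t t' : ℝ, 0 ≤ s → 0 ≤ t → t ≤ t' → ϕ s t ≤ ϕ s t')
    (hη : ∀ s t : ℝ, 0 ≤ s → 0 ≤ t → 0 ≤ η s t)
    (hηhom : ∀ l s t : ℝ, 0 ≤ l → 0 ≤ s → 0 ≤ t → η (l * s) (l * t) = l * η s t)
    (hηmono0 : ∀ t s s' : ℝ, 0 ≤ t → 0 ≤ s → s ≤ s' → η s t ≤ η s' t)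
    (hηmono1 : ∀ s t t' : ℝ, 0 ≤ s → 0 ≤ t → t ≤ t' → η s t ≤ η s t')
    (hadd : ∀ s t : ℝ, 0 ≤ s → 0 ≤ t → φ s t = ϕ s t + η s t) :
    CLnorm φ q0 q1 (y + z) ≤ 2 * max (CLnorm ϕ q0 q1 y) (CLnorm η q0 q1 z) := by
  suffices h : ∀ c, max (CLnorm ϕ q0 q1 y) (CLnorm η q0 q1 z) < c →
      CLnorm φ q0 q1 (y + z) / 2 ≤ c by
    rw [mul_comm, ← ENNReal.div_le_iff two_ne_zero ENNReal.ofNat_ne_top]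
    exact le_of_forall_gt_imp_ge_of_dense h
  intro c hc
  obtain ⟨l0, hy, hl0⟩ := exists_admissible_of_CLnorm_lt (max_lt_iff.1 hc).1
  obtain ⟨l1, hz, hl1⟩ := exists_admissible_of_CLnorm_lt (max_lt_iff.1 hc).2
  have hyz := (hy.mono hϕ (le_max_left l0 l1)).add hq0hom hq1hom hq0add hq1add
    hϕhom hϕmono0 hϕmono1 hηhom hηmono0 hηmono1 hadd (hz.mono hη (le_max_right l0 l1))
  calc CLnorm φ q0 q1 (y + z) / 2 ≤ ((2 * max l0 l1 : ℝ≥0) : ℝ≥0∞) / 2 := by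
        gcongr; exact CLnorm_le_of_admissible hyz
    _ = max (l0 : ℝ≥0∞) l1 := by
        rw [ENNReal.coe_mul, ENNReal.coe_ofNat, ENNReal.coe_max,
          mul_comm, ENNReal.mul_div_cancel_right two_ne_zero ENNReal.ofNat_ne_top]
    _ ≤ c := (max_lt hl0 hl1).le

end CalderonLozanovskii

theorem stmt16_general {α : Type*} (φ ϕ η : ℝ → ℝ → ℝ) (q0 q1 : (α → ℝ) → ℝ≥0∞)
    (hq0hom : ∀ (r : ℝ≥0) (x : α → ℝ), q0 ((r : ℝ) • x) = r * q0 x)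
    (hq1hom : ∀ (r : ℝ≥0) (x : α → ℝ), q1 ((r : ℝ) • x) = r * q1 x)
    (hq0add : ∀ x y : α → ℝ, q0 (x + y) ≤ q0 x + q0 y)
    (hq1add : ∀ x y : α → ℝ, q1 (x + y) ≤ q1 x + q1 y)
    (hϕnonneg : ∀ s t : ℝ, 0 ≤ s → 0 ≤ t → 0 ≤ ϕ s t)
    (hϕhom : ∀ l s t : ℝ, 0 ≤ l → 0 ≤ s → 0 ≤ t → ϕ (l * s) (l * t) = l * ϕ s t)
    (hϕmono0 : ∀ t s s' : ℝ, 0 ≤ t → 0 ≤ s → s ≤ s' → ϕ s t ≤ ϕ s' t)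
    (hϕmono1 : ∀ s t t' : ℝ, 0 ≤ s → 0 ≤ t → t ≤ t' → ϕ s t ≤ ϕ s t')
    (hηnonneg : ∀ s t : ℝ, 0 ≤ s → 0 ≤ t → 0 ≤ η s t)
    (hηhom : ∀ l s t : ℝ, 0 ≤ l → 0 ≤ s → 0 ≤ t → η (l * s) (l * t) = l * η s t)
    (hηmono0 : ∀ t s s' : ℝ, 0 ≤ t → 0 ≤ s → s ≤ s' → η s t ≤ η s' t)
    (hηmono1 : ∀ s t t' : ℝ, 0 ≤ s → 0 ≤ t → t ≤ t' → η s t ≤ η s t')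
    (hadd : ∀ s t : ℝ, 0 ≤ s → 0 ≤ t → φ s t = ϕ s t + η s t) :
    (∀ x : α → ℝ, CLnorm φ q0 q1 x < 1 →
      ∃ y z : α → ℝ, x = y + z ∧ CLnorm ϕ q0 q1 y ≤ 1 ∧ CLnorm η q0 q1 z ≤ 1) ∧
    (∀ y z : α → ℝ,
      CLnorm φ q0 q1 (y + z) ≤ 2 * max (CLnorm ϕ q0 q1 y) (CLnorm η q0 q1 z)) :=
  ⟨fun _ hx => exists_add_CLnorm_le_one hϕnonneg hηnonneg hadd hx,
    fun _ _ => CLnorm_add_le_two_mul_max hq0hom hq1hom hq0add hq1add hϕnonneg hϕhom hϕmono0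
      hϕmono1 hηnonneg hηhom hηmono0 hηmono1 hadd⟩

/-- If `φ = ϕ + η` pointwise with `φ, ϕ, η ∈ 𝒫`, then
`φ(X₀,X₁) = ϕ(X₀,X₁) + η(X₀,X₁)` with constant at most `2`: every `x` with
`‖x‖_{φ(X₀,X₁)} < 1` decomposes as `x = y + z` with `‖y‖_{ϕ(X₀,X₁)} ≤ 1` and
`‖z‖_{η(X₀,X₁)} ≤ 1`, and conversely
`‖y+z‖_{φ(X₀,X₁)} ≤ 2·max(‖y‖_{ϕ(X₀,X₁)}, ‖z‖_{η(X₀,X₁)})`. -/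
theorem stmt16 {α : Type*} (φ ϕ η : ℝ → ℝ → ℝ) (q0 q1 : (α → ℝ) → ℝ≥0∞)
    (hq0mono : ∀ x y : α → ℝ, (∀ a, |x a| ≤ |y a|) → q0 x ≤ q0 y)
    (hq1mono : ∀ x y : α → ℝ, (∀ a, |x a| ≤ |y a|) → q1 x ≤ q1 y)
    (hq0hom : ∀ (r : ℝ≥0) (x : α → ℝ), q0 ((r : ℝ) • x) = r * q0 x)
    (hq1hom : ∀ (r : ℝ≥0) (x : α → ℝ), q1 ((r : ℝ) • x) = r * q1 x)
    (hq0add : ∀ x y : α → ℝ, q0 (x + y) ≤ q0 x + q0 y)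
    (hq1add : ∀ x y : α → ℝ, q1 (x + y) ≤ q1 x + q1 y)
    (hφnonneg : ∀ s t : ℝ, 0 ≤ s → 0 ≤ t → 0 ≤ φ s t)
    (hφhom : ∀ l s t : ℝ, 0 ≤ l → 0 ≤ s → 0 ≤ t → φ (l * s) (l * t) = l * φ s t)
    (hφmono0 : ∀ t s s' : ℝ, 0 ≤ t → 0 ≤ s → s ≤ s' → φ s t ≤ φ s' t)
    (hφmono1 : ∀ s t t' : ℝ, 0 ≤ s → 0 ≤ t → t ≤ t' → φ s t ≤ φ s t')
    (hϕnonneg : ∀ s t : ℝ, 0 ≤ s → 0 ≤ t → 0 ≤ ϕ s t)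
    (hϕhom : ∀ l s t : ℝ, 0 ≤ l → 0 ≤ s → 0 ≤ t → ϕ (l * s) (l * t) = l * ϕ s t)
    (hϕmono0 : ∀ t s s' : ℝ, 0 ≤ t → 0 ≤ s → s ≤ s' → ϕ s t ≤ ϕ s' t)
    (hϕmono1 : ∀ s t t' : ℝ, 0 ≤ s → 0 ≤ t → t ≤ t' → ϕ s t ≤ ϕ s t')
    (hηnonneg : ∀ s t : ℝ, 0 ≤ s → 0 ≤ t → 0 ≤ η s t)
    (hηhom : ∀ l s t : ℝ, 0 ≤ l → 0 ≤ s → 0 ≤ t → η (l * s) (l * t) = l * η s t)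
    (hηmono0 : ∀ t s s' : ℝ, 0 ≤ t → 0 ≤ s → s ≤ s' → η s t ≤ η s' t)
    (hηmono1 : ∀ s t t' : ℝ, 0 ≤ s → 0 ≤ t → t ≤ t' → η s t ≤ η s t')
    (hadd : ∀ s t : ℝ, 0 ≤ s → 0 ≤ t → φ s t = ϕ s t + η s t) :
    (∀ x : α → ℝ, CLnorm φ q0 q1 x < 1 →
      ∃ y z : α → ℝ, x = y + z ∧ CLnorm ϕ q0 q1 y ≤ 1 ∧ CLnorm η q0 q1 z ≤ 1) ∧
    (∀ y z : α → ℝ,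
      CLnorm φ q0 q1 (y + z) ≤ 2 * max (CLnorm ϕ q0 q1 y) (CLnorm η q0 q1 z)) :=
  stmt16_general φ ϕ η q0 q1 hq0hom hq1hom hq0add hq1add hϕnonneg hϕhom hϕmono0 hϕmono1 hηnonneg
    hηhom hηmono0 hηmono1 hadd
end

section
/- Let E be a quasi-Banach lattice and x, u, v ∈ E⁺ and φ ∈ 𝒫 such that x ≤ φ(u,v) (via Krivine functional calculus). Let N, δ > 0 with φ(N,δ) ≥ 1. Then x ≤ φ(u ∧ Nx, v ∨ δx). -/
/-- Let `E` be a quasi-Banach lattice, `x, u, v ∈ E⁺`, `φ ∈ 𝒫`, and let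
`Φ : E → E → E` represent the Krivine functional calculus `φ(·,·)` on positive elements
(lattice homomorphism in the function argument: it turns `⊓` in the first slot and `⊔`
in the second slot into `⊓` resp. `⊔`, and `Φ(λx, μx) = φ(λ,μ)·x` for scalars
`λ, μ ≥ 0`).  If `x ≤ Φ(u,v)` and `N, δ > 0` satisfy `φ(N,δ) ≥ 1`, then
`x ≤ Φ(u ⊓ N·x, v ⊔ δ·x)`. -/
theorem stmt19 {E : Type*} [Lattice E] [AddCommGroup E] [Module ℝ E]
    [CovariantClass E E (· + ·) (· ≤ ·)] [PosSMulMono ℝ E] [SMulPosMono ℝ E]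
    (φ : ℝ → ℝ → ℝ)
    (hφnonneg : ∀ s t : ℝ, 0 ≤ s → 0 ≤ t → 0 ≤ φ s t)
    (hφhom : ∀ l s t : ℝ, 0 ≤ l → 0 ≤ s → 0 ≤ t → φ (l * s) (l * t) = l * φ s t)
    (hφmono0 : ∀ t s s' : ℝ, 0 ≤ t → 0 ≤ s → s ≤ s' → φ s t ≤ φ s' t)
    (hφmono1 : ∀ s t t' : ℝ, 0 ≤ s → 0 ≤ t → t ≤ t' → φ s t ≤ φ s t')
    (Φ : E → E → E)
    (hΦinf : ∀ a a' b : E, 0 ≤ a → 0 ≤ a' → 0 ≤ b → Φ (a ⊓ a') b = Φ a b ⊓ Φ a' b)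
    (hΦsup : ∀ a b b' : E, 0 ≤ a → 0 ≤ b → 0 ≤ b' → Φ a (b ⊔ b') = Φ a b ⊔ Φ a b')
    (hΦdiag : ∀ (l m : ℝ) (w : E), 0 ≤ l → 0 ≤ m → 0 ≤ w →
      Φ (l • w) (m • w) = φ l m • w)
    (x u v : E) (hx : 0 ≤ x) (hu : 0 ≤ u) (hv : 0 ≤ v)
    (hle : x ≤ Φ u v)
    (N δ : ℝ) (hN : 0 < N) (hδ : 0 < δ) (hNδ : 1 ≤ φ N δ) :
    x ≤ Φ (u ⊓ N • x) (v ⊔ δ • x) := by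
  have hNx : (0:E) ≤ N • x := smul_nonneg hN.le hx
  have hδx : (0:E) ≤ δ • x := smul_nonneg hδ.le hx
  have hvs : (0:E) ≤ v ⊔ δ • x := le_trans hv le_sup_left
  rw [hΦinf u (N • x) (v ⊔ δ • x) hu hNx hvs, le_inf_iff]
  constructor
  · rw [hΦsup u v (δ • x) hu hv hδx]
    exact le_trans hle le_sup_left
  · rw [hΦsup (N • x) v (δ • x) hNx hv hδx]
    refine le_trans ?_ le_sup_right
    rw [hΦdiag N δ x hN.le hδ.le hx]
    calc x = (1:ℝ) • x := (one_smul ℝ x).symm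
    _ ≤ φ N δ • x := smul_le_smul_of_nonneg_right hNδ hx
end
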